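/- Removing one arrow from a dissection changes the sign by a computable factor: if β is an arrow of a dissection D with unique predecessor arrow α in the dual tree, then sgn(D - {β}) = sgn(D) · (ε_α ε_β)^{χ(π_β^⊔)}. -/
import Mathlib


section Dissections

variable {ι : Type} [Fintype ι] [DecidableEq ι]

/-- The arrows of `E` directly visible under `α`: the maximal elements of `E` strictly
below `α` in the nesting order `lt` of arrows. -/
def maxBelow (lt : ι → ι → Prop) [DecidableRel lt] (E : Finset ι) (α : ι) : Finset ι :=
  E.filter fun β => lt β α ∧ ∀ γ ∈ E, lt β γ → ¬ lt γ α

/-- The weight `χ(π^⊔_{E,α})` of the polygon sitting directly under the arrow `α` in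
the dissection `E`: the intrinsic weight `w α` of the full region under `α` minus the
weights of the regions under the arrows of `E` directly visible under `α`.  (The
additivity `χ(a) + χ(b) = χ(a↑b)` for nested cut-off regions is built into this
definition.) -/
def chiIn (lt : ι → ι → Prop) [DecidableRel lt] (w : ι → ℤ) (E : Finset ι) (α : ι) : ℤ :=
  w α - ∑ β ∈ maxBelow lt E α, w β

/-- The sign of a dissection `E`: `sgn(E) = ∏_{α ∈ E} ε_α^{χ(π^⊔_{E,α})}`, where
`ε_α = ±1` records whether `α` is a forward or backward arrow. -/
def sgnD (lt : ι → ι → Prop) [DecidableRel lt] (ε : ι → ℤˣ) (w : ι → ℤ)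
    (E : Finset ι) : ℤˣ :=
  ∏ α ∈ E, ε α ^ chiIn lt w E α

lemma mem_maxBelow {lt : ι → ι → Prop} [DecidableRel lt] {E : Finset ι} {α δ : ι} :
    δ ∈ maxBelow lt E α ↔ δ ∈ E ∧ lt δ α ∧ ∀ γ ∈ E, lt δ γ → ¬ lt γ α := by
  simp [maxBelow, and_assoc]

end Dissections

/-- Removing one arrow from a dissection changes the sign by a
computable factor: if `β` is an arrow of a dissection `D` with unique predecessor
arrow `α` in the dual tree (i.e. `α ∈ D` lies directly above `β`: `β` is nested below
`α` with no arrow of `D` strictly between), then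
`sgn(D - {β}) = sgn(D) · (ε_α ε_β)^{χ(π_β^⊔)}`.  Arrows are modeled by their nesting
order `lt` (transitive, irreflexive, with forest-like down-sets) and intrinsic
weights `w`. -/
theorem sign_of_dissection_remove_arrow
    (ι : Type) [Fintype ι] [DecidableEq ι]
    (lt : ι → ι → Prop) [DecidableRel lt]
    (htrans : Transitive lt) (hirr : ∀ x, ¬ lt x x)
    (hforest : ∀ β α α', lt β α → lt β α' → α = α' ∨ lt α α' ∨ lt α' α)
    (ε : ι → ℤˣ) (w : ι → ℤ)
    (D : Finset ι) (β α : ι) (hβ : β ∈ D) (hα : α ∈ D)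
    (hlt : lt β α)
    (hpred : ∀ γ ∈ D, lt β γ → γ = α ∨ lt α γ) :
    sgnD lt ε w (D.erase β) = sgnD lt ε w D * (ε α * ε β) ^ chiIn lt w D β := by
  classical
  set E := D.erase β with hE
  have hαβ : α ≠ β := fun h => hirr β (h ▸ hlt)
  have hαE : α ∈ E := Finset.mem_erase.mpr ⟨hαβ, hα⟩
  -- Lemma A: for γ ∈ D with γ ≠ α, removing β doesn't change maxBelow at γ
  have hA : ∀ γ ∈ D, γ ≠ α → maxBelow lt E γ = maxBelow lt D γ := by
    intro γ hγD hγα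
    ext δ
    simp only [mem_maxBelow, hE, Finset.mem_erase]
    constructor
    · rintro ⟨⟨hδβ, hδD⟩, hδγ, hmax⟩
      refine ⟨hδD, hδγ, ?_⟩
      intro γ' hγ'D hδγ' hγ'γ
      by_cases hb : γ' = β
      · subst hb
        rcases hpred γ hγD hγ'γ with h | h
        · exact hγα h
        · exact hmax α ⟨hαβ, hα⟩ (htrans hδγ' hlt) h
      · exact hmax γ' ⟨hb, hγ'D⟩ hδγ' hγ'γ
    · rintro ⟨hδD, hδγ, hmax⟩
      have hδβ : δ ≠ β := by
        rintro rfl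
        rcases hpred γ hγD hδγ with h | h
        · exact hγα h
        · exact hmax α hα hlt h
      exact ⟨⟨hδβ, hδD⟩, hδγ, fun γ' hγ' hδγ' => hmax γ' hγ'.2 hδγ'⟩
  -- β is directly visible under α in D
  have hβmem : β ∈ maxBelow lt D α := by
    rw [mem_maxBelow]
    refine ⟨hβ, hlt, ?_⟩
    intro γ' hγ'D hβγ' hγ'α
    rcases hpred γ' hγ'D hβγ' with rfl | h
    · exact hirr _ hγ'α
    · exact hirr _ (htrans h hγ'α)
  -- Lemma B: maxBelow at α in E splits
  have hB : maxBelow lt E α = (maxBelow lt D α).erase β ∪ maxBelow lt D β := by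
    ext δ
    simp only [mem_maxBelow, hE, Finset.mem_union, Finset.mem_erase]
    constructor
    · rintro ⟨⟨hδβ, hδD⟩, hδα, hmax⟩
      by_cases hlb : lt δ β
      · refine Or.inr ⟨hδD, hlb, ?_⟩
        intro γ' hγ'D hδγ' hγ'β
        have hγ'β' : γ' ≠ β := fun h => hirr _ (h ▸ hγ'β)
        exact hmax γ' ⟨hγ'β', hγ'D⟩ hδγ' (htrans hγ'β hlt)
      · refine Or.inl ⟨hδβ, hδD, hδα, ?_⟩
        intro γ' hγ'D hδγ' hγ'α
        by_cases hb : γ' = β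
        · exact hlb (hb ▸ hδγ')
        · exact hmax γ' ⟨hb, hγ'D⟩ hδγ' hγ'α
    · rintro (⟨hδβ, hδD, hδα, hmax⟩ | ⟨hδD, hδβ, hmax⟩)
      · exact ⟨⟨hδβ, hδD⟩, hδα, fun γ' hγ' hδγ' => hmax γ' hγ'.2 hδγ'⟩
      · have hδβ' : δ ≠ β := fun h => hirr _ (h ▸ hδβ)
        refine ⟨⟨hδβ', hδD⟩, htrans hδβ hlt, ?_⟩
        intro γ' hγ' hδγ' hγ'α
        rcases hforest δ γ' β hδγ' hδβ with rfl | h | h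
        · exact hγ'.1 rfl
        · exact hmax γ' hγ'.2 hδγ' h
        · rcases hpred γ' hγ'.2 h with rfl | h'
          · exact hirr _ hγ'α
          · exact hirr _ (htrans h' hγ'α)
  have hdisj : Disjoint ((maxBelow lt D α).erase β) (maxBelow lt D β) := by
    rw [Finset.disjoint_left]
    intro δ hδ1 hδ2
    rw [Finset.mem_erase, mem_maxBelow] at hδ1
    rw [mem_maxBelow] at hδ2
    exact hδ1.2.2.2 β hβ hδ2.2.1 hlt
  -- key weight identity
  have key : chiIn lt w E α = chiIn lt w D α + chiIn lt w D β := by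
    unfold chiIn
    rw [hB, Finset.sum_union hdisj,
      Finset.sum_erase_eq_sub hβmem]
    ring
  -- assemble
  unfold sgnD
  rw [← Finset.mul_prod_erase D _ hβ, ← hE,
    ← Finset.mul_prod_erase E _ hαE,
    ← Finset.mul_prod_erase E _ hαE]
  have hP : ∏ γ ∈ E.erase α, ε γ ^ chiIn lt w E γ
      = ∏ γ ∈ E.erase α, ε γ ^ chiIn lt w D γ := by
    refine Finset.prod_congr rfl fun γ hγ => ?_
    rw [Finset.mem_erase, hE, Finset.mem_erase] at hγ
    have : chiIn lt w E γ = chiIn lt w D γ := by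
      unfold chiIn; rw [hA γ hγ.2.2 hγ.1]
    rw [this]
  rw [hP, key, zpow_add, mul_zpow]
  have hc : (ε β ^ chiIn lt w D β) * (ε β ^ chiIn lt w D β) = 1 :=
    Int.units_mul_self _
  have hc' : ∀ X : ℤˣ, (ε β ^ chiIn lt w D β) * ((ε β ^ chiIn lt w D β) * X) = X := by
    intro X; rw [← mul_assoc, hc, one_mul]
  simp only [mul_comm, mul_left_comm, mul_assoc, hc, hc', one_mul]
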